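/- Special soundness of the DLEQ sigma protocol: given two accepting transcripts (C1, C2, c, z) and (C1, C2, c', z') with the same commitment and c ≠ c', the witness s = (z - z')/(c - c') satisfies G = g^s and T = t^s. -/
import Mathlib

/-- Special soundness of the DLEQ sigma protocol. -/
theorem stmt_2 {p : ℕ} [Fact p.Prime] {G : Type*} [CommGroup G]
    (hord : ∀ x : G, x ^ p = 1)
    (g t Gpub T C1 C2 : G) (c z c' z' : ZMod p)
    (hcc : c ≠ c')
    (h1 : g ^ z.val = C1 * Gpub ^ c.val) (h2 : t ^ z.val = C2 * T ^ c.val)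
    (h1' : g ^ z'.val = C1 * Gpub ^ c'.val) (h2' : t ^ z'.val = C2 * T ^ c'.val) :
    Gpub = g ^ (((z - z') / (c - c')).val) ∧ T = t ^ (((z - z') / (c - c')).val) := by
  have hp : 0 < p := (Fact.out : p.Prime).pos
  have hmod : ∀ (x : G) (m : ℕ), x ^ (m % p) = x ^ m := by
    intro x m
    conv_rhs => rw [← Nat.div_add_mod m p]
    rw [pow_add, pow_mul, hord, one_pow, one_mul]
  have hadd : ∀ (x : G) (a b : ZMod p), x ^ (a + b).val = x ^ a.val * x ^ b.val := by
    intro x a b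
    rw [ZMod.val_add, hmod, pow_add]
  have hmul : ∀ (x : G) (a b : ZMod p), x ^ (a * b).val = (x ^ a.val) ^ b.val := by
    intro x a b
    rw [ZMod.val_mul, hmod, pow_mul]
  have hneg : ∀ (x : G) (a : ZMod p), x ^ (-a).val = (x ^ a.val)⁻¹ := by
    intro x a
    have := hadd x a (-a)
    rw [add_neg_cancel] at this
    have h0 : ((0 : ZMod p)).val = 0 := ZMod.val_zero
    rw [h0, pow_zero] at this
    exact eq_inv_of_mul_eq_one_left (by rw [mul_comm]; exact this.symm)
  have hd : c - c' ≠ 0 := sub_ne_zero_of_ne hcc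
  have key : ∀ (x G' C : G), x ^ z.val = C * G' ^ c.val → x ^ z'.val = C * G' ^ c'.val →
      G' = x ^ (((z - z') / (c - c')).val) := by
    intro x G' C hx hx'
    have hw : x ^ (z - z').val = G' ^ (c - c').val := by
      rw [sub_eq_add_neg, hadd, hneg, hx, hx', sub_eq_add_neg, hadd, hneg]
      simp [mul_inv, mul_comm, mul_assoc, mul_left_comm]
    have : (((z - z') / (c - c'))) = (z - z') * (c - c')⁻¹ := div_eq_mul_inv _ _
    rw [this, hmul, hw, ← hmul, mul_comm, ZMod.inv_mul_of_unit _ (isUnit_iff_ne_zero.mpr hd)]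
    rw [ZMod.val_one, pow_one]
  exact ⟨key g Gpub C1 h1 h1', key t T C2 h2 h2'⟩
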